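/- Let A = {a_s(n_s)}_{s=1}^k be an m-cover of ℤ with a_k(n_k) essential and n_k = N_A, where N_A = lcm(n_1,...,n_k). Let m_1,...,m_{k−1} be integers with gcd(m_s,n_s) = 1 for each s ∈ {1,...,k−1}, and set K = {1 ≤ s < k : a_k ≡ a_s (mod n_s)}. Then for every subset J ⊆ K and every r ∈ {0,1,...,N_A−1}, there exists I ⊆ {1,...,k−1} such that I ∩ K = J and the fractional part {∑_{s∈I} m_s/n_s} equals r/N_A. -/

import Mathlib

/-! A point `x₀` lying in fewer than `m` of the classes `a_s(n_s)`, `s < k`, must lie in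
`a_k(n_k)`; as every `n_s` divides `N = n_k`, the classes containing `a_k` are then exactly those
containing `x₀`, and every `x ≢ x₀ (mod N)` lies in one of the others. With `b_s = m_s N / n_s`,
the class `a_s(n_s)` is `{x : b_s x = b_s a_s}` in `ℤ/N`, and `∑_{s∈I} m_s/n_s ≡ (∑_{s∈I} b_s)/N`,
so it suffices that the subset sums of the `b_s` over the other classes cover `ℤ/N`. For this,
evaluate `∑_x e(-xr/N) ∏_s (1 - e((b_s x - b_s a_s)/N))` in two ways: only `x = x₀` contributes,
so it is nonzero; expanding the product turns it into a combination of the sums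
`∑_x e(x(∑_{s∈t} b_s - r)/N)`, which all vanish unless some subset sum equals `r`. -/

open Finset

lemma AddChar.map_sum_eq_prod {ι A M : Type*} [AddCommMonoid A] [CommMonoid M] (ψ : AddChar A M)
    (s : Finset ι) (f : ι → A) : ψ (∑ i ∈ s, f i) = ∏ i ∈ s, ψ (f i) :=
  map_prod ψ.toMonoidHom (fun i ↦ Multiplicative.ofAdd (f i)) s

namespace ZMod

variable {N : ℕ} [NeZero N] {ι : Type*}

theorem exists_subset_sum_eq_of_unique_uncovered (S : Finset ι) (b c : ι → ZMod N)
    (x₀ : ZMod N) (hx₀ : ∀ s ∈ S, b s * x₀ ≠ c s) (hcov : ∀ x ≠ x₀, ∃ s ∈ S, b s * x = c s)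
    (r : ZMod N) : ∃ t ⊆ S, ∑ s ∈ t, b s = r := by
  classical
  by_contra! hr
  set ψ := stdAddChar (N := N)
  let T : ℂ := ∑ x, ψ (-(x * r)) * ∏ s ∈ S, (1 - ψ (b s * x - c s))
  have hT_ne : T ≠ 0 := by
    have hψ : ∀ {y}, ψ y = 1 ↔ y = 0 := by
      rw [← ψ.map_zero_eq_one]; exact injective_stdAddChar.eq_iff
    have hvanish : ∀ x ≠ x₀, ∏ s ∈ S, (1 - ψ (b s * x - c s)) = 0 := fun x hx ↦ by
      obtain ⟨s, hs, hsx⟩ := hcov x hx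
      exact prod_eq_zero hs (by rw [hsx, sub_self, ψ.map_zero_eq_one, sub_self])
    simp only [T]
    rw [Fintype.sum_eq_single x₀ fun x hx ↦ by rw [hvanish x hx, mul_zero]]
    refine mul_ne_zero (ψ.val_isUnit _).ne_zero (prod_ne_zero_iff.mpr fun s hs ↦ ?_)
    rw [sub_ne_zero, ne_comm, Ne, hψ, sub_eq_zero]
    exact hx₀ s hs
  have hT_eq : T = 0 := by
    have hexpand : ∀ x, ψ (-(x * r)) * ∏ s ∈ S, (1 - ψ (b s * x - c s)) =
        ∑ t ∈ S.powerset, (-1) ^ #t * ψ (-∑ s ∈ t, c s) * ψ (x * (∑ s ∈ t, b s - r)) := by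
      intro x
      rw [prod_sub, mul_sum]
      refine sum_congr rfl fun t _ ↦ ?_
      rw [prod_const_one, mul_one, ← ψ.map_sum_eq_prod, mul_left_comm, mul_assoc,
        ← ψ.map_add_eq_mul, ← ψ.map_add_eq_mul, sum_sub_distrib, mul_sub, ← sum_mul]
      congr 2
      ring
    simp only [T, hexpand]
    rw [sum_comm]
    refine sum_eq_zero fun t ht ↦ ?_
    rw [← mul_sum, AddChar.sum_mulShift _ (isPrimitive_stdAddChar N),
      if_neg (sub_ne_zero.mpr (hr t (mem_powerset.mp ht))), Nat.cast_zero, mul_zero]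
  exact hT_ne hT_eq

theorem intCast_mul_div_mul_eq_iff {n : ℕ} (hn : n ∣ N) {u : ℤ} (hu : IsCoprime u n) (x y : ℤ) :
    ((u * (N / n : ℕ) : ℤ) : ZMod N) * x = ((u * (N / n : ℕ) : ℤ) : ZMod N) * y ↔
      (n : ℤ) ∣ x - y := by
  obtain ⟨k, hk⟩ := hn
  have hk0 : (k : ℤ) ≠ 0 := by rintro h; simp_all
  have hn0 : 0 < n := Nat.pos_of_ne_zero (by rintro rfl; simp_all)
  rw [← Int.cast_mul, ← Int.cast_mul, intCast_eq_intCast_iff_dvd_sub, hk,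
    Nat.mul_div_cancel_left k hn0, Nat.cast_mul, ← mul_sub, mul_right_comm,
    mul_dvd_mul_iff_right hk0, dvd_sub_comm]
  exact ⟨hu.symm.dvd_of_dvd_mul_left, fun h ↦ h.mul_left u⟩

end ZMod

theorem Int.fract_intCast_div_natCast_eq {k : Type*} [Field k] [LinearOrder k] [IsOrderedRing k]
    [FloorRing k] {N r : ℕ} {z : ℤ} (h : (z : ZMod N) = r) (hr : r < N) :
    Int.fract ((z : k) / N) = r / N := by
  have : NeZero N := ⟨by omega⟩
  rw [Int.fract_div_intCast_eq_div_intCast_mod, ← ZMod.val_intCast, h, ZMod.val_cast_of_lt hr,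
    Int.cast_natCast]

theorem Int.fract_sum_div_eq {k ι : Type*} [Field k] [LinearOrder k] [IsOrderedRing k]
    [FloorRing k] {n : ι → ℕ} {N r : ℕ} (hdvd : ∀ s, n s ∣ N) (hr : r < N) (u : ι → ℤ)
    (I : Finset ι) (h : ∑ s ∈ I, ((u s * (N / n s : ℕ) : ℤ) : ZMod N) = r) :
    Int.fract (∑ s ∈ I, (u s : k) / n s) = r / N := by
  have hN : (N : k) ≠ 0 := by exact_mod_cast (show N ≠ 0 by omega)
  have hterm : ∀ s, (u s : k) / n s = ((u s * (N / n s : ℕ) : ℤ) : k) / N := fun s ↦ by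
    obtain ⟨c, hc⟩ := hdvd s
    have hn : (n s : k) ≠ 0 := by rintro h; simp_all
    have hc0 : (c : k) ≠ 0 := by rintro h; simp_all
    rw [hc, Nat.mul_div_cancel_left c (Nat.pos_of_ne_zero (by exact_mod_cast hn))]
    push_cast
    exact (mul_div_mul_right _ _ hc0).symm
  simp only [hterm, ← sum_div, ← Int.cast_sum]
  exact Int.fract_intCast_div_natCast_eq (by rw [Int.cast_sum]; exact h) hr

section Cover

variable {ι : Type*} [Fintype ι] (n : ι → ℕ) (a : ι → ℤ)

def coverIndices (x : ℤ) : Finset ι := {s | (n s : ℤ) ∣ x - a s}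

variable {n a}

theorem coverIndices_eq_of_dvd_sub {N : ℕ} (hdvd : ∀ s, n s ∣ N) {x y : ℤ}
    (h : (N : ℤ) ∣ x - y) : coverIndices n a x = coverIndices n a y := by
  ext s
  have hs : (n s : ℤ) ∣ x - y := (Int.natCast_dvd_natCast.mpr (hdvd s)).trans h
  simp only [coverIndices, mem_filter, mem_univ, true_and]
  rw [show x - a s = (x - y) + (y - a s) by ring, dvd_add_right hs]

theorem exists_disjoint_coverIndices_sum_eq {N : ℕ} [NeZero N] (hdvd : ∀ s, n s ∣ N) {u : ι → ℤ}
    (hu : ∀ s, IsCoprime (u s) (n s)) {x₀ : ℤ}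
    (hx₀ : ∀ x, ¬ (N : ℤ) ∣ x - x₀ → ∃ s ∉ coverIndices n a x₀, s ∈ coverIndices n a x)
    (r : ZMod N) : ∃ t, Disjoint t (coverIndices n a x₀) ∧
      ∑ s ∈ t, ((u s * (N / n s : ℕ) : ℤ) : ZMod N) = r := by
  classical
  set b : ι → ZMod N := fun s ↦ ((u s * (N / n s : ℕ) : ℤ) : ZMod N)
  have hb : ∀ s (x : ℤ), b s * x = b s * a s ↔ s ∈ coverIndices n a x := fun s x ↦ by
    simp only [coverIndices, mem_filter, mem_univ, true_and]
    exact ZMod.intCast_mul_div_mul_eq_iff (hdvd s) (hu s) x (a s)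
  have hcov : ∀ x ≠ (x₀ : ZMod N), ∃ s ∈ (coverIndices n a x₀)ᶜ, b s * x = b s * a s := by
    intro x hx
    obtain ⟨x, rfl⟩ := ZMod.intCast_surjective x
    obtain ⟨s, hs, hsx⟩ := hx₀ x (by
      rw [← ZMod.intCast_zmod_eq_zero_iff_dvd, Int.cast_sub]; exact sub_ne_zero.mpr hx)
    exact ⟨s, mem_compl.mpr hs, (hb s x).mpr hsx⟩
  obtain ⟨t, ht, hsum⟩ := ZMod.exists_subset_sum_eq_of_unique_uncovered (coverIndices n a x₀)ᶜ b
    (fun s ↦ b s * a s) x₀ (fun s hs ↦ by rwa [Ne, hb, ← mem_compl]) hcov r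
  exact ⟨t, subset_compl_iff_disjoint_right.mp ht, hsum⟩

end Cover

theorem sun_corollary2_5_general (l m : ℕ) (a : Fin l → ℤ) (n : Fin l → ℕ)
    (ak : ℤ) (nk : ℕ) (hnk : 0 < nk)
    -- the whole system (the `l` classes together with `ak(nk)`) is an `m`-cover of `ℤ`:
    (hcover : ∀ x : ℤ, m ≤
      (Finset.univ.filter (fun s : Fin l => (n s : ℤ) ∣ x - a s)).card
        + (if (nk : ℤ) ∣ x - ak then 1 else 0))
    -- with `ak(nk)` essential:
    (hess : ¬ ∀ x : ℤ, m ≤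
      (Finset.univ.filter (fun s : Fin l => (n s : ℤ) ∣ x - a s)).card)
    -- and `nk = N_A`, the least common multiple of all the moduli:
    (hNA : nk = Nat.lcm (Finset.univ.lcm n) nk)
    (mm : Fin l → ℤ) (hmm : ∀ s, IsCoprime (mm s) (n s : ℤ)) :
    ∀ J ⊆ Finset.univ.filter (fun s : Fin l => (n s : ℤ) ∣ ak - a s),
      ∀ r : ℕ, r < nk → ∃ I : Finset (Fin l),
        I ∩ Finset.univ.filter (fun s : Fin l => (n s : ℤ) ∣ ak - a s) = J ∧
        Int.fract (∑ s ∈ I, (mm s : ℝ) / (n s : ℝ)) = (r : ℝ) / (nk : ℝ) := by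
  intro J hJ r hr
  have : NeZero nk := ⟨hnk.ne'⟩
  have hdvd : ∀ s, n s ∣ nk := fun s ↦
    (dvd_lcm (mem_univ s)).trans (hNA ▸ Nat.dvd_lcm_left _ _)
  obtain ⟨x₀, hx₀⟩ : ∃ x₀, #(coverIndices n a x₀) < m := by push Not at hess; exact hess
  have hcover' : ∀ x, ¬ (nk : ℤ) ∣ x - ak → m ≤ #(coverIndices n a x) := fun x hx ↦ by
    have := hcover x
    rwa [if_neg hx, add_zero] at this
  have hx₀k : (nk : ℤ) ∣ x₀ - ak := by
    by_contra h
    exact hx₀.not_ge (hcover' x₀ h)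
  have hK : coverIndices n a ak = coverIndices n a x₀ :=
    coverIndices_eq_of_dvd_sub hdvd (dvd_sub_comm.mp hx₀k)
  have hrest : ∀ x : ℤ, ¬ (nk : ℤ) ∣ x - x₀ →
      ∃ s ∉ coverIndices n a x₀, s ∈ coverIndices n a x := fun x hx ↦ by
    have hxk : ¬ (nk : ℤ) ∣ x - ak := fun h ↦ hx (by simpa using dvd_sub h hx₀k)
    obtain ⟨s, hs, hs'⟩ := exists_mem_notMem_of_card_lt_card (hx₀.trans_le (hcover' x hxk))
    exact ⟨s, hs', hs⟩
  obtain ⟨t, htK, ht⟩ := exists_disjoint_coverIndices_sum_eq hdvd hmm hrest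
    (r - ∑ s ∈ J, ((mm s * (nk / n s : ℕ) : ℤ) : ZMod nk))
  change J ⊆ coverIndices n a ak at hJ
  rw [hK] at hJ
  refine ⟨t ∪ J, ?_, Int.fract_sum_div_eq hdvd hr mm _ ?_⟩
  · change _ ∩ coverIndices n a ak = J
    rw [hK, union_inter_distrib_right, disjoint_iff_inter_eq_empty.mp htK,
      inter_eq_left.mpr hJ, empty_union]
  · rw [sum_union (htK.mono_right hJ), ht, sub_add_cancel]

/-- **Corollary 2.5** (Sun): Let `A = {a_s(n_s)}_{s=1}^k` be an `m`-cover of `ℤ` with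
`a_k(n_k)` essential and `n_k = N_A = lcm(n₁,…,n_k)`.  Let `m₁,…,m_{k-1}` be integers
coprime to `n₁,…,n_{k-1}` respectively, and let `K = {1 ≤ s < k : a_k ≡ a_s (mod n_s)}`.
Then for every `J ⊆ K` and every `0 ≤ r < N_A` there is `I ⊆ [1,k-1]` with `I ∩ K = J`
and `{∑_{s∈I} m_s/n_s} = r/N_A`.
(Here the classes `a_1(n_1),…,a_{k-1}(n_{k-1})` are indexed by `Fin l` with `l = k - 1`,
and the last class is `ak(nk)`.) -/
theorem sun_corollary2_5 (l m : ℕ) (a : Fin l → ℤ) (n : Fin l → ℕ) (hn : ∀ s, 0 < n s)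
    (ak : ℤ) (nk : ℕ) (hnk : 0 < nk)
    -- the whole system (the `l` classes together with `ak(nk)`) is an `m`-cover of `ℤ`:
    (hcover : ∀ x : ℤ, m ≤
      (Finset.univ.filter (fun s : Fin l => (n s : ℤ) ∣ x - a s)).card
        + (if (nk : ℤ) ∣ x - ak then 1 else 0))
    -- with `ak(nk)` essential:
    (hess : ¬ ∀ x : ℤ, m ≤
      (Finset.univ.filter (fun s : Fin l => (n s : ℤ) ∣ x - a s)).card)
    -- and `nk = N_A`, the least common multiple of all the moduli:
    (hNA : nk = Nat.lcm (Finset.univ.lcm n) nk)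
    (mm : Fin l → ℤ) (hmm : ∀ s, IsCoprime (mm s) (n s : ℤ)) :
    ∀ J ⊆ Finset.univ.filter (fun s : Fin l => (n s : ℤ) ∣ ak - a s),
      ∀ r : ℕ, r < nk → ∃ I : Finset (Fin l),
        I ∩ Finset.univ.filter (fun s : Fin l => (n s : ℤ) ∣ ak - a s) = J ∧
        Int.fract (∑ s ∈ I, (mm s : ℝ) / (n s : ℝ)) = (r : ℝ) / (nk : ℝ) :=
  sun_corollary2_5_general l m a n ak nk hnk hcover hess hNA mm hmm
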